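/- For all total canonical term graphs g and h over a signature Σ, the rigid similarity equals the ⊥-depth of the greatest lower bound: sim†(g,h) = ⊥-depth(g ⊓ h), where g ⊓ h is the greatest lower bound of {g,h} in the complete semilattice of canonical partial term graphs ordered by ≤⊥r, and ⊥-depth(k) is the minimum depth of a ⊥-labelled node of k (ω if k has no ⊥-node). -/

import Mathlib

set_option autoImplicit false

namespace TGR

/-- A signature: a type of symbols, each with a finite arity. -/
structure Signature where
  Sym : Type
  ar : Sym → ℕ

/-- The signature `Σ_⊥`: `Σ` extended by a fresh nullary symbol `⊥` (here `none`). -/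
def Signature.bot (S : Signature) : Signature where
  Sym := Option S.Sym
  ar := fun o => match o with
    | none => 0
    | some f => S.ar f

/-- A rooted graph over a signature `S` with nodes `N`: a labelling, a successor
function respecting arities, and a root node. -/
structure TermGraph (S : Signature) (N : Type) where
  lab : N → S.Sym
  suc : (n : N) → Fin (S.ar (lab n)) → N
  root : N

namespace TermGraph

variable {S : Signature} {N M K : Type}

/-- `g.IsPos π n`: `π` is a position (path of successor indices from the root) of node `n`. -/
inductive IsPos (g : TermGraph S N) : List ℕ → N → Prop
  | root : IsPos g [] g.root
  | step {π : List ℕ} {n : N} (h : IsPos g π n) (i : Fin (S.ar (g.lab n))) :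
      IsPos g (π ++ [(i : ℕ)]) (g.suc n i)

/-- All nodes are reachable from the root. -/
def Reachable (g : TermGraph S N) : Prop :=
  ∀ n : N, ∃ π : List ℕ, g.IsPos π n

/-- The set of positions of `g`. -/
def pos (g : TermGraph S N) : Set (List ℕ) :=
  {π | ∃ n : N, g.IsPos π n}

/-- The set of positions of node `n` in `g`. -/
def nodePos (g : TermGraph S N) (n : N) : Set (List ℕ) :=
  {π | g.IsPos π n}

/-- `π ∼_g π'`: `π` and `π'` are positions of the same node. -/
def Aliases (g : TermGraph S N) (π π' : List ℕ) : Prop :=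
  ∃ n : N, g.IsPos π n ∧ g.IsPos π' n

/-- A position is acyclic if it passes no node twice. -/
def IsAcyclicPos (g : TermGraph S N) (π : List ℕ) : Prop :=
  ∀ (π₁ π₂ : List ℕ) (n : N), π₁ <+: π₂ → π₂ <+: π →
    g.IsPos π₁ n → g.IsPos π₂ n → π₁ = π₂

/-- The set of acyclic positions of node `n` in `g`. -/
def nodePosAcy (g : TermGraph S N) (n : N) : Set (List ℕ) :=
  {π | g.IsPos π n ∧ g.IsAcyclicPos π}

/-- The set of acyclic positions of `g`. -/
def posAcy (g : TermGraph S N) : Set (List ℕ) :=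
  {π | (∃ n : N, g.IsPos π n) ∧ g.IsAcyclicPos π}

/-- The depth of a node: the minimal length of its positions. -/
noncomputable def depth (g : TermGraph S N) (n : N) : ℕ :=
  sInf {k : ℕ | ∃ π : List ℕ, g.IsPos π n ∧ π.length = k}

open Classical in
/-- The (unique) node at a position. -/
noncomputable def nodeAt (g : TermGraph S N) (π : List ℕ) : N :=
  if h : ∃ n : N, g.IsPos π n then h.choose else g.root

/-- The label `g(π)` at a position. -/
noncomputable def labAt (g : TermGraph S N) (π : List ℕ) : S.Sym :=
  g.lab (g.nodeAt π)

/-- `Δ`-homomorphism: root, labelling and successor conditions, the latter two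
suspended on `Δ`-labelled nodes. -/
structure IsDHom (Δ : Set S.Sym) (g : TermGraph S N) (h : TermGraph S M)
    (φ : N → M) : Prop where
  root_eq : φ g.root = h.root
  lab_eq : ∀ n : N, g.lab n ∉ Δ → h.lab (φ n) = g.lab n
  suc_eq : ∀ n : N, g.lab n ∉ Δ → ∀ (i : ℕ) (hi : i < S.ar (g.lab n))
      (hi' : i < S.ar (h.lab (φ n))),
      φ (g.suc n ⟨i, hi⟩) = h.suc (φ n) ⟨i, hi'⟩

/-- Rigidity: `Pa_g(n) = Pa_h(φ n)` for all non-`Δ`-labelled nodes `n`. -/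
def IsRigid (Δ : Set S.Sym) (g : TermGraph S N) (h : TermGraph S M)
    (φ : N → M) : Prop :=
  ∀ n : N, g.lab n ∉ Δ → g.nodePosAcy n = h.nodePosAcy (φ n)

/-- Rigid `Δ`-homomorphism. -/
def IsRigidDHom (Δ : Set S.Sym) (g : TermGraph S N) (h : TermGraph S M)
    (φ : N → M) : Prop :=
  IsDHom Δ g h φ ∧ IsRigid Δ g h φ

/-- Isomorphism of term graphs: a homomorphism with an inverse homomorphism. -/
def Iso (g : TermGraph S N) (h : TermGraph S M) : Prop :=
  ∃ (φ : N → M) (ψ : M → N), IsDHom ∅ g h φ ∧ IsDHom ∅ h g ψ ∧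
    (∀ n : N, ψ (φ n) = n) ∧ (∀ m : M, φ (ψ m) = m)

/-- A partial term graph (over `Σ_⊥`) is total if no node is labelled `⊥`. -/
def Total (g : TermGraph S.bot N) : Prop := ∀ n : N, g.lab n ≠ none

/-- Rigid `⊥`-homomorphism between partial term graphs. -/
def IsRigidBotHom (g : TermGraph S.bot N) (h : TermGraph S.bot M)
    (φ : N → M) : Prop :=
  IsRigidDHom ({none} : Set (Option S.Sym)) g h φ

/-- The `⊥`-depth of a partial term graph: the minimal depth of a `⊥`-labelled
node, `ω` (`⊤`) if there is none. -/
noncomputable def botDepth (g : TermGraph S.bot N) : ℕ∞ :=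
  sInf {d : ℕ∞ | ∃ n : N, g.lab n = none ∧ (g.depth n : ℕ∞) = d}

/-- `m` is an acyclic predecessor of `n`: some acyclic position `π ++ [i]` of `n`
has `π` a position of `m`. -/
def acyPred (g : TermGraph S N) (n : N) : Set N :=
  {m | ∃ (π : List ℕ) (i : ℕ), (π ++ [i]) ∈ g.nodePosAcy n ∧ g.IsPos π m}

/-- Retained nodes of the truncation at depth `d`: the least set of nodes
containing all nodes of depth `< d` and closed under acyclic predecessors. -/
inductive Retained (g : TermGraph S N) (d : ℕ) : N → Prop
  | shallow {n : N} : g.depth n < d → Retained g d n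
  | pred {n m : N} : Retained g d n → m ∈ g.acyPred n → Retained g d m

theorem not_retained_zero {g : TermGraph S N} (n : N) : ¬ g.Retained 0 n := by
  intro h
  induction h with
  | shallow hd => exact Nat.not_lt_zero _ hd
  | pred _ _ ih => exact ih

/-- Fringe nodes of the truncation at depth `d` (a pair `(n, i)` stands for the
fresh node `n^i`); at depth `0` the fringe is just (a copy of) the root. -/
def IsFringe (g : TermGraph S.bot N) (d : ℕ) (p : N × ℕ) : Prop :=
  if d = 0 then p = (g.root, 0)
  else g.Retained d p.1 ∧ ∃ h : p.2 < S.bot.ar (g.lab p.1),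
    (¬ g.Retained d (g.suc p.1 ⟨p.2, h⟩) ∨
      (d - 1 ≤ g.depth p.1 ∧ p.1 ∉ g.acyPred (g.suc p.1 ⟨p.2, h⟩)))

/-- The node set of the rigid truncation: retained nodes plus fringe nodes. -/
def TNode (g : TermGraph S.bot N) (d : ℕ) : Type :=
  {x : N ⊕ (N × ℕ) // Sum.elim (g.Retained d) (g.IsFringe d) x}

def truncLab (g : TermGraph S.bot N) (d : ℕ) (x : TNode g d) : S.bot.Sym :=
  Sum.elim (fun n => g.lab n) (fun _ => none) x.1

open Classical in
noncomputable def truncSuc (g : TermGraph S.bot N) (d : ℕ) :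
    (x : TNode g d) → Fin (S.bot.ar (truncLab g d x)) → TNode g d
  | ⟨Sum.inl n, hn⟩ => fun i =>
      if hf : g.IsFringe d (n, (i : ℕ)) then ⟨Sum.inr (n, (i : ℕ)), hf⟩
      else
        ⟨Sum.inl (g.suc n ⟨(i : ℕ), i.isLt⟩), by
          show g.Retained d (g.suc n ⟨(i : ℕ), i.isLt⟩)
          rcases Nat.eq_zero_or_pos d with hd | hd
          · subst hd
            exact ((not_retained_zero n) hn).elim
          · by_contra hc
            apply hf
            show g.IsFringe d (n, (i : ℕ))
            unfold IsFringe
            rw [if_neg (Nat.pos_iff_ne_zero.mp hd)]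
            exact ⟨hn, i.isLt, Or.inl hc⟩⟩
  | ⟨Sum.inr p, hp⟩ => fun i => absurd i.isLt (Nat.not_lt_zero _)

noncomputable def truncRoot (g : TermGraph S.bot N) (d : ℕ) : TNode g d :=
  if hd : d = 0 then
    ⟨Sum.inr (g.root, 0), by
      subst hd
      show g.IsFringe 0 (g.root, 0)
      simp [IsFringe]⟩
  else
    ⟨Sum.inl g.root, by
      show g.Retained d g.root
      exact Retained.shallow (lt_of_le_of_lt
        (Nat.sInf_le ⟨[], IsPos.root, rfl⟩) (Nat.pos_of_ne_zero hd))⟩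

/-- The rigid truncation `g†d` of a partial term graph at finite depth `d`. -/
noncomputable def trunc (g : TermGraph S.bot N) (d : ℕ) :
    TermGraph S.bot (TNode g d) where
  lab := truncLab g d
  suc := truncSuc g d
  root := truncRoot g d

end TermGraph

/-- A canonical term graph: a term graph whose nodes are sets of positions,
each node being exactly its set of positions, with all nodes reachable. -/
structure CTG (S : Signature) where
  nodes : Set (Set (List ℕ))
  tg : TermGraph S ↥nodes
  reach : tg.Reachable
  canon : ∀ n : ↥nodes, (n : Set (List ℕ)) = tg.nodePos n

namespace CTG

variable {S : Signature}

def pos (g : CTG S) : Set (List ℕ) := g.tg.pos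
def Aliases (g : CTG S) : List ℕ → List ℕ → Prop := g.tg.Aliases
def posAcy (g : CTG S) : Set (List ℕ) := g.tg.posAcy
noncomputable def labAt (g : CTG S) : List ℕ → S.Sym := g.tg.labAt

/-- A canonical partial term graph is total if it has no `⊥`-labelled node. -/
def Total (g : CTG S.bot) : Prop := g.tg.Total

/-- The rigid partial order `g ≤⊥r h`: there is a rigid `⊥`-homomorphism
from `g` to `h`. -/
def LeR (g h : CTG S.bot) : Prop :=
  ∃ φ, TermGraph.IsRigidBotHom g.tg h.tg φ

noncomputable def botDepth (g : CTG S.bot) : ℕ∞ := g.tg.botDepth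

/-- `TruncIso g h d`: the rigid truncations of `g` and `h` at depth `d ≤ ω`
are isomorphic (`g†ω = g`). -/
def TruncIso {N M : Type} (g : TermGraph S.bot N) (h : TermGraph S.bot M)
    (d : ℕ∞) : Prop :=
  (d = ⊤ → TermGraph.Iso g h) ∧
  ∀ k : ℕ, d = (k : ℕ∞) → TermGraph.Iso (g.trunc k) (h.trunc k)

/-- The rigid similarity `sim†(g,h)`: the maximal `d ≤ ω` such that
`g†d ≅ h†d`. -/
noncomputable def simr (g h : CTG S.bot) : ℕ∞ :=
  sSup {d : ℕ∞ | TruncIso g.tg h.tg d}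

open Classical in
/-- The rigid distance `d†(g,h) = 2^{-sim†(g,h)}` (with `2^{-ω} = 0`). -/
noncomputable def rdist (g h : CTG S.bot) : ℝ :=
  if simr g h = ⊤ then 0 else (1 / 2 : ℝ) ^ (simr g h).toNat

def IsUB (A : Set (CTG S.bot)) (u : CTG S.bot) : Prop := ∀ g ∈ A, LeR g u

def IsLubR (A : Set (CTG S.bot)) (u : CTG S.bot) : Prop :=
  IsUB A u ∧ ∀ v, IsUB A v → LeR u v

def IsLB (A : Set (CTG S.bot)) (l : CTG S.bot) : Prop := ∀ g ∈ A, LeR l g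

def IsGlbR (A : Set (CTG S.bot)) (l : CTG S.bot) : Prop :=
  IsLB A l ∧ ∀ m, IsLB A m → LeR m l

/-- A directed set: non-empty and every two elements have an upper bound inside. -/
def DirectedR (A : Set (CTG S.bot)) : Prop :=
  A.Nonempty ∧ ∀ g ∈ A, ∀ h ∈ A, ∃ u ∈ A, LeR g u ∧ LeR h u

/-- `L` is the limit inferior `⨆_{β<α} ⨅_{β≤ι<α} f ι` of the ordinal-indexed
sequence `(f ι)_{ι<α}` in the rigid partial order. -/
def IsLiminfR (α : Ordinal.{0}) (f : Ordinal.{0} → CTG S.bot) (L : CTG S.bot) : Prop :=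
  ∃ inf : Ordinal.{0} → CTG S.bot,
    (∀ β < α, IsGlbR {g | ∃ ι, β ≤ ι ∧ ι < α ∧ g = f ι} (inf β)) ∧
    IsLubR {g | ∃ β < α, g = inf β} L

/-- Cauchy condition for an ordinal-indexed sequence w.r.t. the rigid distance. -/
def OrdCauchy (α : Ordinal.{0}) (f : Ordinal.{0} → CTG S.bot) : Prop :=
  ∀ ε : ℝ, 0 < ε → ∃ β < α, ∀ ι ι' : Ordinal.{0},
    β < ι → ι < ι' → ι' < α → rdist (f ι) (f ι') < ε

/-- Convergence of an ordinal-indexed sequence to `g` w.r.t. the rigid distance. -/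
def OrdTendsto (α : Ordinal.{0}) (f : Ordinal.{0} → CTG S.bot) (g : CTG S.bot) : Prop :=
  ∀ ε : ℝ, 0 < ε → ∃ β < α, ∀ ι : Ordinal.{0}, β < ι → ι < α → rdist (f ι) g < ε

/-- `u` is the unravelling of `g`: the term tree with the same positions and
labels as `g` and trivial aliasing. -/
def IsUnravelling (g u : CTG S) : Prop :=
  u.pos = g.pos ∧ (∀ π ∈ g.pos, u.labAt π = g.labAt π) ∧
  (∀ π π' : List ℕ, u.Aliases π π' ↔ (π ∈ g.pos ∧ π = π'))

end CTG

/-- A labelled quotient tree over a signature `S`. -/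
structure LQT (S : Signature) where
  P : Set (List ℕ)
  nonempty : P.Nonempty
  l : List ℕ → S.Sym
  rel : List ℕ → List ℕ → Prop
  rel_refl : ∀ π ∈ P, rel π π
  rel_symm : ∀ π π' : List ℕ, rel π π' → rel π' π
  rel_trans : ∀ π π' π'' : List ℕ, rel π π' → rel π' π'' → rel π π''
  rel_mem : ∀ π π' : List ℕ, rel π π' → π ∈ P ∧ π' ∈ P
  reach_mem : ∀ (π : List ℕ) (i : ℕ), π ++ [i] ∈ P → π ∈ P
  reach_ar : ∀ (π : List ℕ) (i : ℕ), π ++ [i] ∈ P → i < S.ar (l π)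
  congr_lab : ∀ π π' : List ℕ, rel π π' → l π = l π'
  congr_suc : ∀ (π π' : List ℕ) (i : ℕ), rel π π' → i < S.ar (l π) →
    rel (π ++ [i]) (π' ++ [i])

end TGR

/-!
A rigid `⊥`-homomorphism `φ : k → g` preserves the depths and the acyclic positions of the
non-`⊥` nodes of `k`, and it is injective on them. Below the `⊥`-depth of `k` it therefore
matches the retained nodes and the cut edges of `k` with those of `g`, so `k†d ≅ g†d` for all
finite `d ≤ ⊥-depth(k)`, and `k ≅ g` if `k` is total. Applied to `k = g ⊓ h` this gives
`⊥-depth(g ⊓ h) ≤ sim†(g,h)`.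

Conversely, if `g†d ≅ h†d` then `g†d` maps rigidly onto `g` and, through the isomorphism, onto
`h`. Since `g` is total, every `⊥`-node of `g†d` is a fringe node, at depth `≥ d`. So `g†d` is a
lower bound of `g` and `h` of `⊥`-depth `≥ d`, and `d ≤ ⊥-depth(g ⊓ h)` because the `⊥`-depth is
monotone along rigid `⊥`-homomorphisms.
-/

namespace TGR

namespace TermGraph

variable {S : Signature} {N M K : Type}

section Positions

variable {g : TermGraph S N} {π σ : List ℕ} {n m : N}

theorem isPos_nil_iff : g.IsPos [] n ↔ n = g.root := by
  constructor
  · intro h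
    generalize hπ : ([] : List ℕ) = τ at h
    cases h with
    | root => rfl
    | step _ _ => simp at hπ
  · rintro rfl
    exact .root

theorem isPos_append_singleton_iff {i : ℕ} :
    g.IsPos (π ++ [i]) n ↔
      ∃ m, g.IsPos π m ∧ ∃ hi : i < S.ar (g.lab m), n = g.suc m ⟨i, hi⟩ := by
  constructor
  · intro h
    generalize hπ : π ++ [i] = τ at h
    cases h with
    | root => simp at hπ
    | step hm j =>
      obtain ⟨rfl, hj⟩ := List.append_inj' hπ rfl
      obtain rfl : i = j := by simpa using hj
      exact ⟨_, hm, j.isLt, rfl⟩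
  · rintro ⟨m, hm, hi, rfl⟩
    exact hm.step ⟨i, hi⟩

theorem IsPos.unique {n' : N} (h : g.IsPos π n) (h' : g.IsPos π n') : n = n' := by
  induction π using List.reverseRecOn generalizing n n' with
  | nil => rw [isPos_nil_iff.mp h, isPos_nil_iff.mp h']
  | append_singleton π i ih =>
    obtain ⟨m, hm, hi, rfl⟩ := isPos_append_singleton_iff.mp h
    obtain ⟨m', hm', hi', rfl⟩ := isPos_append_singleton_iff.mp h'
    obtain rfl := ih hm hm'
    rfl

theorem IsPos.exists_of_prefix (h : g.IsPos π n) (hσ : σ <+: π) : ∃ m, g.IsPos σ m := by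
  induction π using List.reverseRecOn generalizing n with
  | nil => exact ⟨n, List.prefix_nil.mp hσ ▸ h⟩
  | append_singleton π i ih =>
    rcases List.prefix_concat_iff.mp hσ with rfl | hσ
    · exact ⟨n, h⟩
    · obtain ⟨m, hm, -⟩ := isPos_append_singleton_iff.mp h
      exact ih hm hσ

theorem IsPos.ar_pos_of_prefix (h : g.IsPos π n) (hσ : σ <+: π) (hne : σ ≠ π)
    (hm : g.IsPos σ m) : 0 < S.ar (g.lab m) := by
  obtain ⟨_ | ⟨c, ρ⟩, rfl⟩ := hσ
  · simp at hne
  · obtain ⟨m', hm'⟩ := h.exists_of_prefix ⟨ρ, (List.append_cons σ c ρ).symm⟩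
    obtain ⟨m'', hm'', hc, -⟩ := isPos_append_singleton_iff.mp hm'
    obtain rfl := hm''.unique hm
    exact Nat.zero_lt_of_lt hc

theorem IsPos.change_prefix {π' ρ : List ℕ} (h : g.IsPos π m) (h' : g.IsPos π' m)
    (hρ : g.IsPos (π' ++ ρ) n) : g.IsPos (π ++ ρ) n := by
  induction ρ using List.reverseRecOn generalizing n with
  | nil =>
    rw [List.append_nil] at hρ ⊢
    rwa [hρ.unique h']
  | append_singleton ρ i ih =>
    rw [← List.append_assoc] at hρ ⊢
    obtain ⟨m', hm', hi, rfl⟩ := isPos_append_singleton_iff.mp hρ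
    exact (ih hm').step ⟨i, hi⟩

theorem IsPos.depth_le (h : g.IsPos π n) : g.depth n ≤ π.length :=
  Nat.sInf_le ⟨π, h, rfl⟩

theorem IsAcyclicPos.of_prefix (h : g.IsAcyclicPos π) (hσ : σ <+: π) : g.IsAcyclicPos σ :=
  fun π₁ π₂ n h₁₂ h₂ p₁ p₂ => h π₁ π₂ n h₁₂ (h₂.trans hσ) p₁ p₂

/-- A shortest position is acyclic: a cycle on it could be cut out. -/
theorem IsPos.exists_isAcyclicPos_length_eq_depth (h : g.IsPos π n) :
    ∃ π', g.IsPos π' n ∧ g.IsAcyclicPos π' ∧ π'.length = g.depth n := by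
  obtain ⟨π', hπ', hlen⟩ := Nat.sInf_mem (⟨π.length, π, h, rfl⟩ :
    {k : ℕ | ∃ π : List ℕ, g.IsPos π n ∧ π.length = k}.Nonempty)
  refine ⟨π', hπ', fun π₁ π₂ m h₁₂ h₂ p₁ p₂ => ?_, hlen⟩
  obtain ⟨ρ, rfl⟩ := h₂
  have hshort := (p₁.change_prefix p₂ hπ').depth_le
  have hle := h₁₂.length_le
  change _ = g.depth n at hlen
  simp only [List.length_append] at hshort hlen
  exact h₁₂.eq_of_length (by omega)

theorem depth_le_of_nodePosAcy_eq {h : TermGraph S M} {m : M}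
    (hnm : g.nodePosAcy n = h.nodePosAcy m) (hn : g.IsPos π n) : h.depth m ≤ g.depth n := by
  obtain ⟨π', hπ', hac, hlen⟩ := hn.exists_isAcyclicPos_length_eq_depth
  have : π' ∈ h.nodePosAcy m := hnm ▸ ⟨hπ', hac⟩
  exact hlen ▸ this.1.depth_le

theorem depth_suc_le (hg : g.Reachable) (n : N) (i : Fin (S.ar (g.lab n))) :
    g.depth (g.suc n i) ≤ g.depth n + 1 := by
  obtain ⟨π, hπ⟩ := hg n
  obtain ⟨π', hπ', -, hlen⟩ := hπ.exists_isAcyclicPos_length_eq_depth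
  simpa [hlen] using (hπ'.step i).depth_le

/-- A repetition on `σ ++ [i]` has to revisit `n` at a prefix of `σ`, and would then also be a
repetition on `σ ++ [j]`. -/
theorem mem_nodePosAcy_of_sibling {i j : ℕ} (hj : σ ++ [j] ∈ g.nodePosAcy n)
    (hi : g.IsPos (σ ++ [i]) n) : σ ++ [i] ∈ g.nodePosAcy n := by
  refine ⟨hi, fun π₁ π₂ w h₁₂ h₂ p₁ p₂ => ?_⟩
  rcases List.prefix_concat_iff.mp h₂ with rfl | h₂
  · obtain rfl := p₂.unique hi
    by_contra hne
    have h₁ := (List.prefix_concat_iff.mp h₁₂).resolve_left hne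
    obtain rfl :=
      hj.2 π₁ (σ ++ [j]) w (h₁.trans (List.prefix_append _ _)) (List.prefix_refl _) p₁ hj.1
    simpa using h₁.length_le
  · exact hj.2 π₁ π₂ w h₁₂ (h₂.trans (List.prefix_append _ _)) p₁ p₂

end Positions

section Homomorphisms

variable {Δ : Set S.Sym} {g : TermGraph S N} {h : TermGraph S M} {k : TermGraph S K}
  {φ : N → M} {ψ : M → N}

theorem suc_congr (g : TermGraph S N) {m m' : N} (h : m = m') {i : ℕ}
    (hi : i < S.ar (g.lab m)) (hi' : i < S.ar (g.lab m')) :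
    g.suc m ⟨i, hi⟩ = g.suc m' ⟨i, hi'⟩ := by
  subst h
  rfl

theorem IsDHom.isPos (hφ : IsDHom Δ g h φ) (hΔ : ∀ n, g.lab n ∈ Δ → S.ar (g.lab n) = 0)
    {π : List ℕ} {n : N} (hp : g.IsPos π n) : h.IsPos π (φ n) := by
  induction hp with
  | root => exact hφ.root_eq ▸ .root
  | @step π n _ i ih =>
    by_cases hn : g.lab n ∈ Δ
    · exact (Fin.cast (hΔ n hn) i).elim0
    · have hi : (i : ℕ) < S.ar (h.lab (φ n)) := by rw [hφ.lab_eq n hn]; exact i.isLt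
      rw [hφ.suc_eq n hn i i.isLt hi]
      exact ih.step ⟨i, hi⟩

theorem IsDHom.isPos_of_empty (hφ : IsDHom ∅ g h φ) {π : List ℕ} {n : N}
    (hp : g.IsPos π n) : h.IsPos π (φ n) :=
  hφ.isPos (fun _ hn => hn.elim) hp

theorem IsAcyclicPos.of_isPos_map (hφ : ∀ π n, g.IsPos π n → h.IsPos π (φ n))
    {π : List ℕ} (hac : h.IsAcyclicPos π) : g.IsAcyclicPos π :=
  fun π₁ π₂ n h₁₂ h₂ p₁ p₂ => hac π₁ π₂ (φ n) h₁₂ h₂ (hφ _ _ p₁) (hφ _ _ p₂)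

theorem IsDHom.mono {Δ' : Set S.Sym} (hΔ : Δ ⊆ Δ') (hφ : IsDHom Δ g h φ) :
    IsDHom Δ' g h φ where
  root_eq := hφ.root_eq
  lab_eq n hn := hφ.lab_eq n (fun h => hn (hΔ h))
  suc_eq n hn := hφ.suc_eq n (fun h => hn (hΔ h))

theorem IsDHom.comp {ψ : M → K} (hφ : IsDHom Δ g h φ) (hψ : IsDHom Δ h k ψ) :
    IsDHom Δ g k (ψ ∘ φ) where
  root_eq := by rw [Function.comp_apply, hφ.root_eq, hψ.root_eq]
  lab_eq n hn := by
    rw [Function.comp_apply, hψ.lab_eq (φ n) (hφ.lab_eq n hn ▸ hn), hφ.lab_eq n hn]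
  suc_eq n hn i hi hi' := by
    have hi₂ : i < S.ar (h.lab (φ n)) := hφ.lab_eq n hn ▸ hi
    rw [Function.comp_apply, hφ.suc_eq n hn i hi hi₂,
      hψ.suc_eq (φ n) (hφ.lab_eq n hn ▸ hn) i hi₂ hi']
    rfl

theorem IsDHom.inv (hφ : IsDHom ∅ g h φ) (h₁ : Function.LeftInverse ψ φ)
    (h₂ : Function.RightInverse ψ φ) : IsDHom ∅ h g ψ where
  root_eq := by rw [← hφ.root_eq, h₁]
  lab_eq m _ := by simpa [h₂ m] using (hφ.lab_eq (ψ m) id).symm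
  suc_eq m _ i hi hi' := by
    have hi₂ : i < S.ar (h.lab (φ (ψ m))) := by rwa [h₂]
    rw [← suc_congr h (h₂ m) hi₂ hi, ← hφ.suc_eq (ψ m) id i hi' hi₂, h₁]

theorem IsDHom.isPos_iff (hφ : IsDHom ∅ g h φ) (hψ : IsDHom ∅ h g ψ)
    (h₁ : Function.LeftInverse ψ φ) {π : List ℕ} {n : N} :
    g.IsPos π n ↔ h.IsPos π (φ n) :=
  ⟨hφ.isPos_of_empty, fun hp => h₁ n ▸ hψ.isPos_of_empty hp⟩

theorem Iso.of_bijective (hφ : IsDHom ∅ g h φ) (hbij : φ.Bijective) : Iso g h := by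
  obtain ⟨ψ, h₁, h₂⟩ := Function.bijective_iff_has_inverse.mp hbij
  exact ⟨φ, ψ, hφ, hφ.inv h₁ h₂, h₁, h₂⟩

theorem Iso.symm (e : Iso g h) : Iso h g := by
  obtain ⟨φ, ψ, hφ, hψ, h₁, h₂⟩ := e
  exact ⟨ψ, φ, hψ, hφ, h₂, h₁⟩

theorem Iso.trans (e : Iso g h) (e' : Iso h k) : Iso g k := by
  obtain ⟨φ, ψ, hφ, hψ, h₁, h₂⟩ := e
  obtain ⟨φ', ψ', hφ', hψ', h₁', h₂'⟩ := e'
  exact ⟨φ' ∘ φ, ψ ∘ ψ', hφ.comp hφ', hψ'.comp hψ, fun n => by simp [h₁, h₁'],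
    fun n => by simp [h₂, h₂']⟩

end Homomorphisms

theorem lab_ne_none_of_ar_pos {g : TermGraph S.bot N} {n : N}
    (h : 0 < S.bot.ar (g.lab n)) : g.lab n ≠ none := by
  intro hn
  rw [hn] at h
  exact h.false

theorem lab_ne_none_of_mem_acyPred {g : TermGraph S.bot N} {m n : N} (hm : m ∈ g.acyPred n) :
    g.lab m ≠ none := by
  obtain ⟨π, i, ⟨hpos, -⟩, hmπ⟩ := hm
  obtain ⟨m', hm', hi, -⟩ := isPos_append_singleton_iff.mp hpos
  obtain rfl := hm'.unique hmπ
  exact lab_ne_none_of_ar_pos (Nat.zero_lt_of_lt hi)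

theorem IsDHom.isPos_of_bot {k : TermGraph S.bot N} {g : TermGraph S.bot M} {φ : N → M}
    (hφ : IsDHom ({none} : Set (Option S.Sym)) k g φ) {π : List ℕ} {n : N}
    (hp : k.IsPos π n) : g.IsPos π (φ n) :=
  hφ.isPos (fun n hn => by rw [hn]; rfl) hp

theorem IsDHom.isAcyclicPos_of_injOn {k : TermGraph S.bot N} {g : TermGraph S.bot M}
    {φ : N → M} (hφ : IsDHom ({none} : Set (Option S.Sym)) k g φ)
    (hinj : ∀ x y, k.lab x ≠ none → k.lab y ≠ none → φ x = φ y → x = y)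
    {τ : List ℕ} {x : N} (hτ : k.IsPos τ x) (hx : k.lab x ≠ none) (hac : k.IsAcyclicPos τ) :
    g.IsAcyclicPos τ := by
  intro π₁ π₂ w h₁₂ h₂ p₁ p₂
  have lift (σ) (hσ : σ <+: τ) (hw : g.IsPos σ w) :
      ∃ y, k.IsPos σ y ∧ k.lab y ≠ none ∧ φ y = w := by
    obtain ⟨y, hy⟩ := hτ.exists_of_prefix hσ
    refine ⟨y, hy, ?_, (hφ.isPos_of_bot hy).unique hw⟩
    by_cases he : σ = τ
    · subst he
      rwa [hy.unique hτ]
    · exact lab_ne_none_of_ar_pos (hτ.ar_pos_of_prefix hσ he hy)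
  obtain ⟨y₁, hy₁, hl₁, rfl⟩ := lift π₁ (h₁₂.trans h₂) p₁
  obtain ⟨y₂, hy₂, hl₂, he⟩ := lift π₂ h₂ p₂
  obtain rfl := hinj _ _ hl₂ hl₁ he
  exact hac π₁ π₂ y₂ h₁₂ h₂ hy₁ hy₂

theorem isRigidBotHom_id (g : TermGraph S.bot N) : IsRigidBotHom g g id :=
  ⟨⟨rfl, fun _ _ => rfl, fun _ _ _ _ _ => rfl⟩, fun _ _ => rfl⟩

theorem IsRigidBotHom.comp {g : TermGraph S.bot N} {h : TermGraph S.bot M}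
    {k : TermGraph S.bot K} {φ : N → M} {ψ : M → K}
    (hφ : IsRigidBotHom g h φ) (hψ : IsRigidBotHom h k ψ) : IsRigidBotHom g k (ψ ∘ φ) :=
  ⟨hφ.1.comp hψ.1, fun n hn => (hφ.2 n hn).trans (hψ.2 (φ n) (hφ.1.lab_eq n hn ▸ hn))⟩

theorem Iso.isRigidBotHom {g : TermGraph S.bot N} {h : TermGraph S.bot M} (e : Iso g h) :
    ∃ φ, IsRigidBotHom g h φ := by
  obtain ⟨φ, ψ, hφ, hψ, h₁, -⟩ := e
  refine ⟨φ, hφ.mono (Set.empty_subset _), fun n _ => Set.ext fun π => ?_⟩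
  exact ⟨fun ⟨hp, hac⟩ => ⟨hφ.isPos_of_empty hp,
      IsAcyclicPos.of_isPos_map (fun _ _ => hψ.isPos_of_empty) hac⟩,
    fun ⟨hp, hac⟩ => ⟨(hφ.isPos_iff hψ h₁).mpr hp,
      IsAcyclicPos.of_isPos_map (fun _ _ => hφ.isPos_of_empty) hac⟩⟩

section BotDepth

variable {g : TermGraph S.bot N} {n : N}

theorem botDepth_le_depth (hn : g.lab n = none) : g.botDepth ≤ g.depth n :=
  sInf_le ⟨n, hn, rfl⟩

theorem le_depth_of_le_botDepth {d : ℕ} (hd : (d : ℕ∞) ≤ g.botDepth) (hn : g.lab n = none) :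
    d ≤ g.depth n := by
  exact_mod_cast hd.trans (botDepth_le_depth hn)

theorem botDepth_eq_top_iff : g.botDepth = ⊤ ↔ g.Total := by
  refine ⟨fun htop n hn => ?_, fun htot => ?_⟩
  · simpa [htop] using botDepth_le_depth hn
  · exact sInf_eq_top.mpr fun d ⟨n, hn, _⟩ => (htot n hn).elim

end BotDepth

namespace IsRigidBotHom

variable {k : TermGraph S.bot N} {g : TermGraph S.bot M} {φ : N → M}

theorem isPos (hφ : IsRigidBotHom k g φ) {π : List ℕ} {n : N} (hp : k.IsPos π n) :
    g.IsPos π (φ n) :=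
  hφ.1.isPos_of_bot hp

theorem lab_eq (hφ : IsRigidBotHom k g φ) {n : N} (hn : k.lab n ≠ none) :
    g.lab (φ n) = k.lab n :=
  hφ.1.lab_eq n hn

theorem nodePosAcy_eq (hφ : IsRigidBotHom k g φ) {n : N} (hn : k.lab n ≠ none) :
    k.nodePosAcy n = g.nodePosAcy (φ n) :=
  hφ.2 n hn

theorem eq_of_map_eq (hφ : IsRigidBotHom k g φ) (hk : k.Reachable) {n n' : N}
    (hn : k.lab n ≠ none) (hn' : k.lab n' ≠ none) (he : φ n = φ n') : n = n' := by
  obtain ⟨π, hπ⟩ := hk n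
  obtain ⟨π', hπ', hac, -⟩ := hπ.exists_isAcyclicPos_length_eq_depth
  have : π' ∈ k.nodePosAcy n' := by
    rw [hφ.nodePosAcy_eq hn', ← he, ← hφ.nodePosAcy_eq hn]
    exact ⟨hπ', hac⟩
  exact hπ'.unique this.1

theorem depth_eq (hφ : IsRigidBotHom k g φ) (hk : k.Reachable) {n : N} (hn : k.lab n ≠ none) :
    g.depth (φ n) = k.depth n := by
  obtain ⟨π, hπ⟩ := hk n
  exact le_antisymm (depth_le_of_nodePosAcy_eq (hφ.nodePosAcy_eq hn) hπ)
    (depth_le_of_nodePosAcy_eq (hφ.nodePosAcy_eq hn).symm (hφ.isPos hπ))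

theorem lift_isPos (hφ : IsRigidBotHom k g φ) {π : List ℕ} {m : M} (hp : g.IsPos π m) :
    (∃ n, k.IsPos π n ∧ φ n = m) ∨ ∃ π' n, π' <+: π ∧ k.IsPos π' n ∧ k.lab n = none := by
  induction hp with
  | root => exact .inl ⟨k.root, .root, hφ.1.root_eq⟩
  | @step π m _ i ih =>
    rcases ih with ⟨n, hn, rfl⟩ | ⟨π', n, hpre, hn, hbot⟩
    · by_cases hb : k.lab n = none
      · exact .inr ⟨π, n, List.prefix_append _ _, hn, hb⟩
      · have hi : (i : ℕ) < S.bot.ar (k.lab n) := hφ.lab_eq hb ▸ i.isLt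
        exact .inl ⟨_, hn.step ⟨i, hi⟩, hφ.1.suc_eq n hb i hi i.isLt⟩
    · exact .inr ⟨π', n, hpre.trans (List.prefix_append _ _), hn, hbot⟩

theorem botDepth_le (hφ : IsRigidBotHom k g φ) (hg : g.Reachable) : k.botDepth ≤ g.botDepth := by
  refine le_sInf fun _ ⟨m, hm, hd⟩ => hd ▸ ?_
  obtain ⟨π₀, hπ₀⟩ := hg m
  obtain ⟨π, hπ, -, hlen⟩ := hπ₀.exists_isAcyclicPos_length_eq_depth
  rcases hφ.lift_isPos hπ with ⟨n, hn, rfl⟩ | ⟨π', n, hpre, hn, hbot⟩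
  · have hbot : k.lab n = none := by
      by_contra hb
      exact hb (hφ.lab_eq hb ▸ hm)
    exact (botDepth_le_depth hbot).trans (by exact_mod_cast hlen ▸ hn.depth_le)
  · refine (botDepth_le_depth hbot).trans ?_
    exact_mod_cast hlen ▸ hn.depth_le.trans hpre.length_le

theorem acyPred_iff (hφ : IsRigidBotHom k g φ) (hk : k.Reachable) {n s : N}
    (hn : k.lab n ≠ none) (hs : k.lab s ≠ none) : n ∈ k.acyPred s ↔ φ n ∈ g.acyPred (φ s) := by
  refine ⟨fun ⟨π, j, hmem, hp⟩ => ⟨π, j, hφ.nodePosAcy_eq hs ▸ hmem, hφ.isPos hp⟩,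
    fun ⟨π, j, hmem, hp⟩ => ?_⟩
  rw [← hφ.nodePosAcy_eq hs] at hmem
  obtain ⟨m, hm⟩ := hmem.1.exists_of_prefix (List.prefix_append _ _)
  obtain rfl := hφ.eq_of_map_eq hk (lab_ne_none_of_mem_acyPred ⟨π, j, hmem, hm⟩) hn
    ((hφ.isPos hm).unique hp)
  exact ⟨π, j, hmem, hm⟩

theorem eq_suc_of_map_eq (hφ : IsRigidBotHom k g φ) {n n' : N} (hn' : k.lab n' ≠ none)
    (hpred : n ∈ k.acyPred n') {i : ℕ} (hi : i < S.bot.ar (k.lab n))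
    (he : φ n' = φ (k.suc n ⟨i, hi⟩)) :
    n' = k.suc n ⟨i, hi⟩ := by
  obtain ⟨σ, j, hmem, hσ⟩ := hpred
  rw [hφ.nodePosAcy_eq hn'] at hmem
  have hsib := mem_nodePosAcy_of_sibling hmem (he ▸ hφ.isPos (hσ.step ⟨i, hi⟩))
  rw [← hφ.nodePosAcy_eq hn'] at hsib
  exact hsib.1.unique (hσ.step ⟨i, hi⟩)

theorem iso_of_total (hφ : IsRigidBotHom k g φ) (hk : k.Reachable) (hg : g.Reachable)
    (htot : k.Total) : Iso k g := by
  refine Iso.of_bijective ⟨hφ.1.root_eq, fun n _ => hφ.lab_eq (htot n),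
    fun n _ => hφ.1.suc_eq n (htot n)⟩
    ⟨fun n n' he => hφ.eq_of_map_eq hk (htot n) (htot n') he, fun m => ?_⟩
  obtain ⟨π, hπ⟩ := hg m
  rcases hφ.lift_isPos hπ with ⟨n, -, he⟩ | ⟨-, n, -, -, hbot⟩
  · exact ⟨n, he⟩
  · exact (htot n hbot).elim

end IsRigidBotHom

theorem Iso.botDepth_eq {g : TermGraph S.bot N} {h : TermGraph S.bot M} (e : Iso g h)
    (hg : g.Reachable) (hh : h.Reachable) : g.botDepth = h.botDepth := by
  obtain ⟨φ, hφ⟩ := e.isRigidBotHom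
  obtain ⟨ψ, hψ⟩ := e.symm.isRigidBotHom
  exact le_antisymm (hφ.botDepth_le hh) (hψ.botDepth_le hg)

def transport (t : TermGraph S N) (e : N ≃ M) : TermGraph S M where
  lab m := t.lab (e.symm m)
  suc m i := e (t.suc (e.symm m) i)
  root := e t.root

theorem isDHom_transport (t : TermGraph S N) (e : N ≃ M) : IsDHom ∅ t (t.transport e) e where
  root_eq := rfl
  lab_eq n _ := congrArg t.lab (e.symm_apply_apply n)
  suc_eq n _ _ hi hi' :=
    congrArg e (suc_congr t (e.symm_apply_apply n).symm hi hi')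

theorem isPos_transport_iff (t : TermGraph S N) (e : N ≃ M) {π : List ℕ} {n : N} :
    (t.transport e).IsPos π (e n) ↔ t.IsPos π n :=
  ((isDHom_transport t e).isPos_iff
    ((isDHom_transport t e).inv e.left_inv e.right_inv) e.left_inv).symm

theorem nodePos_injective {t : TermGraph S N} (ht : t.Reachable) :
    Function.Injective t.nodePos := by
  intro n n' h
  obtain ⟨π, hπ⟩ := ht n
  exact hπ.unique (show π ∈ t.nodePos n' from h ▸ hπ)

theorem exists_ctg_iso {t : TermGraph S N} (ht : t.Reachable) : ∃ c : CTG S, Iso c.tg t := by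
  let e : N ≃ Set.range t.nodePos :=
    Equiv.ofBijective _ (Set.rangeFactorization_bijective.mpr (nodePos_injective ht))
  refine ⟨⟨_, t.transport e, fun x => ?_, fun x => ?_⟩,
    (Iso.of_bijective (isDHom_transport t e) e.bijective).symm⟩
  · obtain ⟨π, hπ⟩ := ht (e.symm x)
    exact ⟨π, e.apply_symm_apply x ▸ (isPos_transport_iff t e).mpr hπ⟩
  · rw [← e.apply_symm_apply x]
    ext π
    exact (isPos_transport_iff t e).symm

/-- The edge from `n` to its `i`-th successor is cut off by the truncation at depth `d`
(provided `n` is retained). -/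
def IsCutEdge (g : TermGraph S N) (d : ℕ) (n : N) (i : Fin (S.ar (g.lab n))) : Prop :=
  ¬ g.Retained d (g.suc n i) ∨ (d - 1 ≤ g.depth n ∧ n ∉ g.acyPred (g.suc n i))

section Truncation

variable {g : TermGraph S.bot N} {d : ℕ}

theorem trunc_root_val (hd : d ≠ 0) : (g.trunc d).root.1 = Sum.inl g.root := by
  simp [trunc, truncRoot, hd]

theorem trunc_suc_of_isFringe {n : N} (hn : g.Retained d n) {i : ℕ}
    (hi : i < S.bot.ar (g.lab n)) (hf : g.IsFringe d (n, i)) :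
    (g.trunc d).suc ⟨Sum.inl n, hn⟩ ⟨i, hi⟩ = ⟨Sum.inr (n, i), hf⟩ := by
  simp only [trunc, truncSuc]
  exact dif_pos hf

theorem trunc_suc_of_not_isFringe {n : N} (hn : g.Retained d n) {i : ℕ}
    (hi : i < S.bot.ar (g.lab n)) (hf : ¬ g.IsFringe d (n, i)) :
    ((g.trunc d).suc ⟨Sum.inl n, hn⟩ ⟨i, hi⟩).1 = Sum.inl (g.suc n ⟨i, hi⟩) := by
  simp [trunc, truncSuc, hf]

theorem isFringe_iff (hd : d ≠ 0) {n : N} {i : ℕ} :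
    g.IsFringe d (n, i) ↔ g.Retained d n ∧ ∃ hi : i < S.bot.ar (g.lab n),
      g.IsCutEdge d n ⟨i, hi⟩ := by
  rw [IsFringe, if_neg hd]
  rfl

/-- The projection `g†d → g`; a fringe node `n^i` goes to the `i`-th successor of `n`. -/
noncomputable def truncProj (g : TermGraph S.bot N) (d : ℕ) (x : TNode g d) : N :=
  Sum.elim id (fun p => if h : p.2 < S.bot.ar (g.lab p.1) then g.suc p.1 ⟨p.2, h⟩
    else g.root) x.1

theorem isDHom_truncProj (hd : d ≠ 0) :
    IsDHom ({none} : Set (Option S.Sym)) (g.trunc d) g (truncProj g d) where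
  root_eq := by simp [truncProj, trunc_root_val hd]
  lab_eq := by
    rintro ⟨n | p, hx⟩ hlab
    · rfl
    · exact (hlab rfl).elim
  suc_eq := by
    rintro ⟨n | p, hx⟩ hlab i hi hi'
    · by_cases hf : g.IsFringe d (n, i)
      · rw [trunc_suc_of_isFringe hx hi hf]
        exact dif_pos hi
      · simp [truncProj, trunc_suc_of_not_isFringe hx hi hf]
    · exact (hlab rfl).elim

theorem isPos_trunc_of_retained (hd : d ≠ 0) {π : List ℕ} {n : N} (hπ : g.IsPos π n)
    (hac : g.IsAcyclicPos π) (hn : g.Retained d n) :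
    (g.trunc d).IsPos π ⟨Sum.inl n, hn⟩ := by
  induction π using List.reverseRecOn generalizing n with
  | nil =>
    obtain rfl := isPos_nil_iff.mp hπ
    have hroot : (g.trunc d).root = ⟨Sum.inl g.root, hn⟩ := Subtype.ext (trunc_root_val hd)
    exact hroot ▸ .root
  | append_singleton π i ih =>
    obtain ⟨m, hm, hi, rfl⟩ := isPos_append_singleton_iff.mp hπ
    have hpred : m ∈ g.acyPred (g.suc m ⟨i, hi⟩) := ⟨π, i, ⟨hπ, hac⟩, hm⟩
    have hmret : g.Retained d m := hn.pred hpred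
    have hf : ¬ g.IsFringe d (m, i) := by
      intro hf
      obtain ⟨-, _, hnr | ⟨-, hnp⟩⟩ := (isFringe_iff hd).mp hf
      exacts [hnr hn, hnp hpred]
    have hstep := (ih hm (hac.of_prefix (List.prefix_append _ _)) hmret).step ⟨i, hi⟩
    have hsuc : (g.trunc d).suc ⟨Sum.inl m, hmret⟩ ⟨i, hi⟩ = ⟨Sum.inl (g.suc m ⟨i, hi⟩), hn⟩ :=
      Subtype.ext (trunc_suc_of_not_isFringe hmret hi hf)
    rwa [hsuc] at hstep

theorem isRigidBotHom_truncProj (hd : d ≠ 0) :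
    IsRigidBotHom (g.trunc d) g (truncProj g d) := by
  have hinj : ∀ x y : TNode g d, (g.trunc d).lab x ≠ none → (g.trunc d).lab y ≠ none →
      truncProj g d x = truncProj g d y → x = y := by
    rintro ⟨n | p, hx⟩ ⟨n' | p', hy⟩ hlx hly he
    · exact Subtype.ext (congrArg Sum.inl he)
    all_goals first | exact (hlx rfl).elim | exact (hly rfl).elim
  refine ⟨isDHom_truncProj hd, ?_⟩
  rintro ⟨n | p, hx⟩ hlab
  · ext π
    refine ⟨fun ⟨hp, hac⟩ => ⟨(isDHom_truncProj hd).isPos_of_bot hp,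
      (isDHom_truncProj hd).isAcyclicPos_of_injOn hinj hp hlab hac⟩, fun ⟨hp, hac⟩ => ?_⟩
    exact ⟨isPos_trunc_of_retained hd hp hac hx,
      IsAcyclicPos.of_isPos_map (fun _ _ => (isDHom_truncProj hd).isPos_of_bot) hac⟩
  · exact (hlab rfl).elim

theorem eq_root_of_trunc_zero (x : TNode g 0) : x = (g.trunc 0).root := by
  rcases x with ⟨n | p, hx⟩
  · exact (not_retained_zero n hx).elim
  · obtain rfl : p = (g.root, 0) := by simpa [IsFringe] using hx
    exact Subtype.ext (by simp [trunc, truncRoot])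

theorem trunc_reachable (hg : g.Reachable) (d : ℕ) : (g.trunc d).Reachable := by
  rcases eq_or_ne d 0 with rfl | hd
  · exact fun x => ⟨[], eq_root_of_trunc_zero x ▸ .root⟩
  have retained_reachable (n) (hn : g.Retained d n) :
      ∃ π, (g.trunc d).IsPos π ⟨Sum.inl n, hn⟩ := by
    obtain ⟨π, hπ⟩ := hg n
    obtain ⟨π', hπ', hac, -⟩ := hπ.exists_isAcyclicPos_length_eq_depth
    exact ⟨π', isPos_trunc_of_retained hd hπ' hac hn⟩
  rintro ⟨n | ⟨n, i⟩, hx⟩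
  · exact retained_reachable n hx
  · obtain ⟨hn, hi, -⟩ := (isFringe_iff hd).mp hx
    obtain ⟨π, hπ⟩ := retained_reachable n hn
    exact ⟨_, trunc_suc_of_isFringe hn hi hx ▸ hπ.step ⟨i, hi⟩⟩

theorem trunc_zero_lab (x : TNode g 0) : (g.trunc 0).lab x = none := by
  rcases x with ⟨n | p, hx⟩
  exacts [(not_retained_zero n hx).elim, rfl]

theorem trunc_zero_iso {h : TermGraph S.bot M} : Iso (g.trunc 0) (h.trunc 0) := by
  refine Iso.of_bijective (φ := fun _ => (h.trunc 0).root)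
    ⟨rfl, fun x _ => ?_, fun x _ i hi _ => ?_⟩
    ⟨fun x y _ => (eq_root_of_trunc_zero x).trans (eq_root_of_trunc_zero y).symm,
      fun y => ⟨(g.trunc 0).root, (eq_root_of_trunc_zero y).symm⟩⟩
  · rw [trunc_zero_lab, trunc_zero_lab]
  · rw [trunc_zero_lab] at hi
    exact absurd hi (Nat.not_lt_zero i)

theorem IsFringe.le_length_add_one (hd : d ≠ 0) {n : N} {j : ℕ} {σ : List ℕ}
    (hf : g.IsFringe d (n, j)) (hσ : g.IsPos σ n) : d ≤ σ.length + 1 := by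
  obtain ⟨-, hj, hnr | ⟨hdep, -⟩⟩ := (isFringe_iff hd).mp hf
  · have hdeep : ¬ g.depth (g.suc n ⟨j, hj⟩) < d := fun h => hnr (.shallow h)
    have hle := (hσ.step ⟨j, hj⟩).depth_le
    simp only [List.length_append, List.length_singleton] at hle
    omega
  · have := hσ.depth_le
    omega

theorem le_length_of_isPos_fringe (hd : d ≠ 0) {p : N × ℕ} (hp : g.IsFringe d p) {τ : List ℕ}
    (hτ : (g.trunc d).IsPos τ ⟨Sum.inr p, hp⟩) : d ≤ τ.length := by
  rcases List.eq_nil_or_concat τ with rfl | ⟨σ, j, rfl⟩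
  · have := congrArg Subtype.val (isPos_nil_iff.mp hτ)
    simp [trunc_root_val hd] at this
  rw [List.concat_eq_append] at hτ
  obtain ⟨⟨y | q, hy⟩, hσ, hj, he⟩ := isPos_append_singleton_iff.mp hτ
  · by_cases hf : g.IsFringe d (y, j)
    · rw [trunc_suc_of_isFringe hy hj hf] at he
      obtain rfl : p = (y, j) := Sum.inr.inj (congrArg Subtype.val he)
      simpa using hf.le_length_add_one hd ((isDHom_truncProj hd).isPos_of_bot hσ)
    · have := congrArg Subtype.val he
      simp [trunc_suc_of_not_isFringe hy hj hf] at this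
  · exact absurd hj (Nat.not_lt_zero j)

theorem le_botDepth_trunc (hg : g.Reachable) (htot : g.Total) (d : ℕ) :
    (d : ℕ∞) ≤ (g.trunc d).botDepth := by
  rcases eq_or_ne d 0 with rfl | hd
  · simp
  refine le_sInf fun _ ⟨x, hx, hdx⟩ => hdx ▸ ?_
  rcases x with ⟨n | p, hp⟩
  · exact (htot n hx).elim
  · obtain ⟨τ, hτ⟩ := trunc_reachable hg d ⟨Sum.inr p, hp⟩
    obtain ⟨τ', hτ', -, hlen⟩ := hτ.exists_isAcyclicPos_length_eq_depth
    exact_mod_cast hlen ▸ le_length_of_isPos_fringe hd hp hτ'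

end Truncation

section RigidTruncation

variable {k : TermGraph S.bot N} {g : TermGraph S.bot M} {φ : N → M} {d : ℕ}

theorem Retained.lab_ne_none (hbd : (d : ℕ∞) ≤ k.botDepth) {n : N} (hn : k.Retained d n) :
    k.lab n ≠ none := by
  induction hn with
  | shallow hdep => exact fun hb => (le_depth_of_le_botDepth hbd hb).not_gt hdep
  | pred _ hm _ => exact lab_ne_none_of_mem_acyPred hm

namespace IsRigidBotHom

theorem retained_map (hφ : IsRigidBotHom k g φ) (hk : k.Reachable)
    (hbd : (d : ℕ∞) ≤ k.botDepth) {n : N} (hn : k.Retained d n) : g.Retained d (φ n) := by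
  induction hn with
  | shallow hdep =>
    exact .shallow (hφ.depth_eq hk ((Retained.shallow hdep).lab_ne_none hbd) ▸ hdep)
  | pred hn hm ih =>
    exact .pred ih ((hφ.acyPred_iff hk (lab_ne_none_of_mem_acyPred hm) (hn.lab_ne_none hbd)).mp hm)

theorem exists_retained_preimage (hφ : IsRigidBotHom k g φ) (hg : g.Reachable)
    (hbd : (d : ℕ∞) ≤ k.botDepth) {m : M} (hm : g.Retained d m) :
    ∃ n, k.Retained d n ∧ φ n = m := by
  induction hm with
  | @shallow m hdep =>
    obtain ⟨π₀, hπ₀⟩ := hg m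
    obtain ⟨π, hπ, -, hlen⟩ := hπ₀.exists_isAcyclicPos_length_eq_depth
    rcases hφ.lift_isPos hπ with ⟨n, hn, he⟩ | ⟨π', n, hpre, hn, hb⟩
    · exact ⟨n, .shallow (by have := hn.depth_le; omega), he⟩
    · have := le_depth_of_le_botDepth hbd hb
      have := hn.depth_le
      have := hpre.length_le
      omega
  | pred _ hpred ih =>
    obtain ⟨n, hn, rfl⟩ := ih
    obtain ⟨π, i, hmem, hp⟩ := hpred
    rw [← hφ.nodePosAcy_eq (hn.lab_ne_none hbd)] at hmem
    obtain ⟨n', hn'⟩ := hmem.1.exists_of_prefix (List.prefix_append _ _)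
    exact ⟨n', .pred hn ⟨π, i, hmem, hn'⟩, (hφ.isPos hn').unique hp⟩

theorem retained_iff (hφ : IsRigidBotHom k g φ) (hk : k.Reachable) (hg : g.Reachable)
    (hbd : (d : ℕ∞) ≤ k.botDepth) {n : N} (hn : k.lab n ≠ none) :
    k.Retained d n ↔ g.Retained d (φ n) := by
  refine ⟨hφ.retained_map hk hbd, fun h => ?_⟩
  obtain ⟨n', hn', he⟩ := hφ.exists_retained_preimage hg hbd h
  rwa [← hφ.eq_of_map_eq hk (hn'.lab_ne_none hbd) hn he]

/-- An edge of `k` into a `⊥`-node is cut, and so is its image: otherwise the image of the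
`⊥`-node would be the image of a retained node of `k`, which `eq_suc_of_map_eq` identifies with
the `⊥`-node. -/
theorem isCutEdge_iff (hφ : IsRigidBotHom k g φ) (hk : k.Reachable) (hg : g.Reachable)
    (hbd : (d : ℕ∞) ≤ k.botDepth) {n : N} (hn : k.Retained d n) {i : ℕ}
    (hi : i < S.bot.ar (k.lab n)) (hi' : i < S.bot.ar (g.lab (φ n))) :
    k.IsCutEdge d n ⟨i, hi⟩ ↔ g.IsCutEdge d (φ n) ⟨i, hi'⟩ := by
  have hlab := hn.lab_ne_none hbd
  unfold IsCutEdge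
  rw [← hφ.1.suc_eq n hlab i hi hi', hφ.depth_eq hk hlab]
  by_cases hb : k.lab (k.suc n ⟨i, hi⟩) ≠ none
  · rw [hφ.retained_iff hk hg hbd hb, hφ.acyPred_iff hk hlab hb]
  rw [not_not] at hb
  refine iff_of_true (.inl fun hret => hret.lab_ne_none hbd hb) ?_
  by_cases hret : g.Retained d (φ (k.suc n ⟨i, hi⟩))
  · refine .inr ⟨?_, fun hpred => ?_⟩
    · have := le_depth_of_le_botDepth hbd hb
      have := depth_suc_le hk n ⟨i, hi⟩
      omega
    · obtain ⟨n', hn', he⟩ := hφ.exists_retained_preimage hg hbd hret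
      rw [← he] at hpred
      have hpred' := (hφ.acyPred_iff hk hlab (hn'.lab_ne_none hbd)).mpr hpred
      exact hn'.lab_ne_none hbd (hφ.eq_suc_of_map_eq (hn'.lab_ne_none hbd) hpred' hi he ▸ hb)
  · exact .inl hret

theorem isFringe_iff (hφ : IsRigidBotHom k g φ) (hk : k.Reachable) (hg : g.Reachable)
    (hbd : (d : ℕ∞) ≤ k.botDepth) (hd : d ≠ 0) {n : N} (hn : k.Retained d n) (i : ℕ) :
    k.IsFringe d (n, i) ↔ g.IsFringe d (φ n, i) := by
  have har : S.bot.ar (g.lab (φ n)) = S.bot.ar (k.lab n) := by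
    rw [hφ.lab_eq (hn.lab_ne_none hbd)]
  simp only [TermGraph.isFringe_iff hd, hn, hφ.retained_map hk hbd hn, true_and]
  exact ⟨fun ⟨hi, hcut⟩ => ⟨har ▸ hi, (hφ.isCutEdge_iff hk hg hbd hn hi _).mp hcut⟩,
    fun ⟨hi, hcut⟩ => ⟨har ▸ hi, (hφ.isCutEdge_iff hk hg hbd hn _ hi).mpr hcut⟩⟩

theorem mapsTo_truncNode (hφ : IsRigidBotHom k g φ) (hk : k.Reachable) (hg : g.Reachable)
    (hbd : (d : ℕ∞) ≤ k.botDepth) (hd : d ≠ 0) :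
    ∀ x, Sum.elim (k.Retained d) (k.IsFringe d) x →
      Sum.elim (g.Retained d) (g.IsFringe d) (Sum.map φ (Prod.map φ id) x)
  | Sum.inl _, hn => hφ.retained_map hk hbd hn
  | Sum.inr (_, i), hf =>
    (hφ.isFringe_iff hk hg hbd hd ((TermGraph.isFringe_iff hd).mp hf).1 i).mp hf

theorem isDHom_truncMap (hφ : IsRigidBotHom k g φ) (hk : k.Reachable) (hg : g.Reachable)
    (hbd : (d : ℕ∞) ≤ k.botDepth) (hd : d ≠ 0) :
    IsDHom ∅ (k.trunc d) (g.trunc d) (Subtype.map _ (hφ.mapsTo_truncNode hk hg hbd hd)) where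
  root_eq := Subtype.ext (by simp [Subtype.map, trunc_root_val hd, hφ.1.root_eq])
  lab_eq := by
    rintro ⟨n | p, hx⟩ -
    · exact hφ.lab_eq (Retained.lab_ne_none hbd hx)
    · rfl
  suc_eq := by
    rintro ⟨n | p, hx⟩ - i hi hi'
    · apply Subtype.ext
      by_cases hf : k.IsFringe d (n, i)
      · have hf' := (hφ.isFringe_iff hk hg hbd hd hx i).mp hf
        rw [trunc_suc_of_isFringe hx hi hf]
        exact (congrArg Subtype.val (trunc_suc_of_isFringe (g := g) _ hi' hf')).symm
      · have hf' := mt (hφ.isFringe_iff hk hg hbd hd hx i).mpr hf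
        have := trunc_suc_of_not_isFringe (g := g) (hφ.retained_map hk hbd hx) hi' hf'
        simp only [Subtype.map, trunc_suc_of_not_isFringe hx hi hf]
        exact (congrArg Sum.inl (hφ.1.suc_eq n (Retained.lab_ne_none hbd hx) i hi hi')).trans
          this.symm
    · exact absurd hi (Nat.not_lt_zero i)

theorem bijective_truncMap (hφ : IsRigidBotHom k g φ) (hk : k.Reachable) (hg : g.Reachable)
    (hbd : (d : ℕ∞) ≤ k.botDepth) (hd : d ≠ 0) :
    (Subtype.map _ (hφ.mapsTo_truncNode hk hg hbd hd)).Bijective := by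
  have hinj {n n' : N} (hn : k.Retained d n) (hn' : k.Retained d n') (he : φ n = φ n') :
      n = n' :=
    hφ.eq_of_map_eq hk (hn.lab_ne_none hbd) (hn'.lab_ne_none hbd) he
  have hfr {p : N × ℕ} (hp : k.IsFringe d p) : k.Retained d p.1 :=
    ((TermGraph.isFringe_iff hd).mp hp).1
  refine ⟨?_, ?_⟩
  · rintro ⟨n | p, hx⟩ ⟨n' | p', hy⟩ he <;>
      simp only [Subtype.map, Subtype.mk.injEq, Sum.map_inl, Sum.map_inr, reduceCtorEq,
        Sum.inl.injEq, Sum.inr.injEq, Prod.map, Prod.mk.injEq, id] at he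
    · exact Subtype.ext (congrArg Sum.inl (hinj hx hy he))
    · exact Subtype.ext (congrArg Sum.inr (Prod.ext (hinj (hfr hx) (hfr hy) he.1) he.2))
  · rintro ⟨m | ⟨m, i⟩, hy⟩
    · obtain ⟨n, hn, rfl⟩ := hφ.exists_retained_preimage hg hbd hy
      exact ⟨⟨Sum.inl n, hn⟩, rfl⟩
    · obtain ⟨n, hn, rfl⟩ :=
        hφ.exists_retained_preimage hg hbd ((TermGraph.isFringe_iff hd).mp hy).1
      exact ⟨⟨Sum.inr (n, i), (hφ.isFringe_iff hk hg hbd hd hn i).mpr hy⟩, rfl⟩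

theorem trunc_iso (hφ : IsRigidBotHom k g φ) (hk : k.Reachable) (hg : g.Reachable)
    (hbd : (d : ℕ∞) ≤ k.botDepth) : Iso (k.trunc d) (g.trunc d) := by
  rcases eq_or_ne d 0 with rfl | hd
  · exact trunc_zero_iso
  · exact Iso.of_bijective (hφ.isDHom_truncMap hk hg hbd hd) (hφ.bijective_truncMap hk hg hbd hd)

end IsRigidBotHom

end RigidTruncation

end TermGraph

namespace CTG

variable {S : Signature}

theorem isLB_pair {g h w : CTG S.bot} (hg : LeR w g) (hh : LeR w h) : IsLB {g, h} w := by
  rintro x (rfl | rfl)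
  exacts [hg, hh]

theorem botDepth_le_of_leR {g h : CTG S.bot} (hgh : LeR g h) : g.botDepth ≤ h.botDepth := by
  obtain ⟨φ, hφ⟩ := hgh
  exact hφ.botDepth_le h.reach

theorem leR_of_iso_trunc {w g : CTG S.bot} {c : ℕ} (hc : c ≠ 0)
    (e : TermGraph.Iso w.tg (g.tg.trunc c)) : LeR w g := by
  obtain ⟨φ, hφ⟩ := e.isRigidBotHom
  exact ⟨_, hφ.comp (TermGraph.isRigidBotHom_truncProj hc)⟩

theorem le_botDepth_of_truncIso {g h k : CTG S.bot} (hg : g.Total) (hk : IsGlbR {g, h} k)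
    {d : ℕ∞} (hd : TruncIso g.tg h.tg d) : d ≤ k.botDepth := by
  induction d using ENat.recTopCoe with
  | top =>
    obtain ⟨φ, hφ⟩ := (hd.1 rfl).isRigidBotHom
    have := botDepth_le_of_leR (hk.2 g (isLB_pair ⟨id, TermGraph.isRigidBotHom_id _⟩ ⟨φ, hφ⟩))
    rwa [botDepth, TermGraph.botDepth_eq_top_iff.mpr hg] at this
  | coe c =>
    rcases eq_or_ne c 0 with rfl | hc
    · simp
    have hr := TermGraph.trunc_reachable g.reach c
    obtain ⟨w, hw⟩ := TermGraph.exists_ctg_iso hr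
    have hwk := hk.2 w (isLB_pair (leR_of_iso_trunc hc hw)
      (leR_of_iso_trunc hc (hw.trans (hd.2 c rfl))))
    calc (c : ℕ∞) ≤ (g.tg.trunc c).botDepth := TermGraph.le_botDepth_trunc g.reach hg c
      _ = w.botDepth := (hw.botDepth_eq w.reach hr).symm
      _ ≤ k.botDepth := botDepth_le_of_leR hwk

theorem truncIso_botDepth {g h k : CTG S.bot} (hkg : LeR k g) (hkh : LeR k h) :
    TruncIso g.tg h.tg k.botDepth := by
  obtain ⟨φ, hφ⟩ := hkg
  obtain ⟨ψ, hψ⟩ := hkh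
  refine ⟨fun htop => ?_, fun c hc => ?_⟩
  · have htot := TermGraph.botDepth_eq_top_iff.mp htop
    exact (hφ.iso_of_total k.reach g.reach htot).symm.trans
      (hψ.iso_of_total k.reach h.reach htot)
  · exact (hφ.trunc_iso k.reach g.reach hc.ge).symm.trans (hψ.trunc_iso k.reach h.reach hc.ge)

end CTG

theorem similarity_eq_botDepth_glb_general (S : Signature) (g h : CTG S.bot)
    (hg : g.Total) (k : CTG S.bot)
    (hk : CTG.IsGlbR {g, h} k) :
    CTG.simr g h = CTG.botDepth k :=
  le_antisymm (sSup_le fun _ hd => CTG.le_botDepth_of_truncIso hg hk hd)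
    (le_sSup (CTG.truncIso_botDepth (hk.1 g (by simp)) (hk.1 h (by simp))))

/-- For all total canonical term graphs `g` and `h`, the rigid
similarity equals the `⊥`-depth of the greatest lower bound `g ⊓ h` taken in the
complete semilattice of canonical partial term graphs ordered by `≤⊥r`. -/
theorem similarity_eq_botDepth_glb (S : Signature) (g h : CTG S.bot)
    (hg : g.Total) (hh : h.Total) (k : CTG S.bot)
    (hk : CTG.IsGlbR {g, h} k) :
    CTG.simr g h = CTG.botDepth k :=
  similarity_eq_botDepth_glb_general S g h hg k hk

end TGR
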